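/- Let V be a finite type, c : V → V → ℝ≥0 a capacity function, S ⊆ V a subset, P ≥ 1 an integer, and s, t distinct vertices of V with s ∉ S and t ∉ S. Let c_s : V → V → ℝ≥0 be a sibling capacity function with c_s u v = 0 unless u ∈ S and v ∈ S, and for all u, v ∈ S let σ_{u,v} : Fin P ≃ Fin P be a bijection. Then the maximum s-t flow value of the P-fold sibling replication of S equals the maximum s-t flow value of the capacity function c'' on V defined by c'' u v = P · (c u v + c_s u v) if u ∈ S or v ∈ S, and c'' u v = c u v otherwise. -/

import Mathlib

/-!
Collapsing the `P` copies of each vertex of `S` turns a flow on the replication into a flow on `V`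
by adding up, for every edge `(u, v)`, the flow on all edges between copies of `u` and copies of
`v`; the capacities of those edges add up to at most `c'' u v`. Conversely a flow `g` for `c''` is
spread evenly over the copies: each of the `P` copies of a vertex of `S` carries a `1 / P` share
of its flow, and on an edge inside `S` that share is split between the parallel edge and the
`σ`-sibling edge in the ratio `c u v : cs u v`. Both constructions transfer flows along the
projection of the copies onto `V`, and both preserve conservation and the flow value.
-/

open Finset

attribute [local instance] Classical.propDecidable

noncomputable section

/-- `f` is an `s`-`t` flow for the capacity function `c`. -/
def IsFlow {W : Type*} [Fintype W] (c : W → W → NNReal) (s t : W) (f : W → W → ℝ) : Prop :=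
  (∀ u v, 0 ≤ f u v ∧ f u v ≤ (c u v : ℝ)) ∧
  ∀ v, v ≠ s → v ≠ t → (∑ u, f u v) = (∑ w, f v w)

/-- The value of a flow `f` with source `s`. -/
def flowValue {W : Type*} [Fintype W] (f : W → W → ℝ) (s : W) : ℝ :=
  (∑ w, f s w) - (∑ u, f u s)

/-- The maximum `s`-`t` flow value (the greatest value attained by an `s`-`t` flow). -/
def maxFlowValue {W : Type*} [Fintype W] (c : W → W → NNReal) (s t : W) : ℝ :=
  sSup {μ : ℝ | ∃ f, IsFlow c s t f ∧ flowValue f s = μ}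

/-- The capacity function of the `P`-fold sibling replication of `S`, with sibling
capacities `cs` and sibling bijections `σ`. -/
def sibRepCap {V : Type*} (c cs : V → V → NNReal) (S : Set V) (P : ℕ)
    (σ : ↥S → ↥S → (Fin P ≃ Fin P)) :
    ({v : V // v ∉ S} ⊕ (↥S × Fin P)) → ({v : V // v ∉ S} ⊕ (↥S × Fin P)) → NNReal
  | Sum.inl u, Sum.inl v => c u.1 v.1
  | Sum.inl u, Sum.inr (v, _) => c u.1 v.1
  | Sum.inr (v, _), Sum.inl u => c v.1 u.1
  | Sum.inr (u, i), Sum.inr (v, j) =>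
      (if i = j then c u.1 v.1 else 0) + (if j = σ u v i then cs u.1 v.1 else 0)

theorem maxFlowValue_eq_of_forall_exists {V W : Type*} [Fintype V] [Fintype W]
    {c : V → V → NNReal} {c' : W → W → NNReal} {s t : V} {s' t' : W}
    (h₁ : ∀ f, IsFlow c s t f → ∃ g, IsFlow c' s' t' g ∧ flowValue g s' = flowValue f s)
    (h₂ : ∀ g, IsFlow c' s' t' g → ∃ f, IsFlow c s t f ∧ flowValue f s = flowValue g s') :
    maxFlowValue c s t = maxFlowValue c' s' t' := by
  unfold maxFlowValue
  congr 1
  ext μ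
  constructor
  · rintro ⟨f, hf, rfl⟩
    obtain ⟨g, hg, hval⟩ := h₁ f hf
    exact ⟨g, hg, hval⟩
  · rintro ⟨g, hg, rfl⟩
    obtain ⟨f, hf, hval⟩ := h₂ g hg
    exact ⟨f, hf, hval⟩

section Fibration

variable {V W : Type*} [Fintype V] [Fintype W] (π : W → V)

def pushforwardFlow (f : W → W → ℝ) (u v : V) : ℝ :=
  ∑ a with π a = u, ∑ b with π b = v, f a b

lemma sum_pushforwardFlow_left (f : W → W → ℝ) (v : V) :
    ∑ u, pushforwardFlow π f u v = ∑ b with π b = v, ∑ a, f a b := by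
  simp only [pushforwardFlow]
  rw [sum_fiberwise univ π, sum_comm]

lemma sum_pushforwardFlow_right (f : W → W → ℝ) (u : V) :
    ∑ v, pushforwardFlow π f u v = ∑ a with π a = u, ∑ b, f a b := by
  simp only [pushforwardFlow]
  rw [sum_comm]
  exact sum_congr rfl fun a _ => sum_fiberwise univ π _

theorem IsFlow.pushforward {c' : W → W → NNReal} {c : V → V → NNReal} {s t : W}
    {f : W → W → ℝ} (hf : IsFlow c' s t f)
    (hcap : ∀ u v, ∑ a with π a = u, ∑ b with π b = v, (c' a b : ℝ) ≤ c u v) :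
    IsFlow c (π s) (π t) (pushforwardFlow π f) := by
  refine ⟨fun u v => ⟨?_, ?_⟩, fun v hvs hvt => ?_⟩
  · exact sum_nonneg fun a _ => sum_nonneg fun b _ => (hf.1 a b).1
  · exact (sum_le_sum fun a _ => sum_le_sum fun b _ => (hf.1 a b).2).trans (hcap u v)
  · rw [sum_pushforwardFlow_left, sum_pushforwardFlow_right]
    refine sum_congr rfl fun a ha => ?_
    have hπa := (mem_filter.1 ha).2
    exact hf.2 a (fun h => hvs (h ▸ hπa).symm) (fun h => hvt (h ▸ hπa).symm)

lemma flowValue_pushforwardFlow (f : W → W → ℝ) (s : W) (hs : ∀ a, π a = π s → a = s) :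
    flowValue (pushforwardFlow π f) (π s) = flowValue f s := by
  have hfib : ({a | π a = π s} : Finset W) = {s} := by
    ext a; simpa using ⟨hs a, fun h => h ▸ rfl⟩
  rw [flowValue, sum_pushforwardFlow_left, sum_pushforwardFlow_right, hfib, sum_singleton,
    sum_singleton, flowValue]

def pullbackFlow (w : W → W → ℝ) (g : V → V → ℝ) (a b : W) : ℝ :=
  w a b * g (π a) (π b)

variable {π} {w : W → W → ℝ} {α : W → ℝ}

lemma sum_pullbackFlow_left (hcol : ∀ b u, ∑ a with π a = u, w a b = α b)
    (g : V → V → ℝ) (b : W) :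
    ∑ a, pullbackFlow π w g a b = α b * ∑ u, g u (π b) := by
  rw [← sum_fiberwise univ π, mul_sum]
  refine sum_congr rfl fun u _ => ?_
  rw [← hcol b u, sum_mul]
  exact sum_congr rfl fun a ha => by rw [pullbackFlow, (mem_filter.1 ha).2]

lemma sum_pullbackFlow_right (hrow : ∀ a v, ∑ b with π b = v, w a b = α a)
    (g : V → V → ℝ) (a : W) :
    ∑ b, pullbackFlow π w g a b = α a * ∑ v, g (π a) v := by
  rw [← sum_fiberwise univ π, mul_sum]
  refine sum_congr rfl fun v _ => ?_
  rw [← hrow a v, sum_mul]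
  exact sum_congr rfl fun b hb => by rw [pullbackFlow, (mem_filter.1 hb).2]

theorem IsFlow.pullback {c : V → V → NNReal} {c' : W → W → NNReal} {s t : W}
    {g : V → V → ℝ} (hg : IsFlow c (π s) (π t) g) (hw : ∀ a b, 0 ≤ w a b)
    (hrow : ∀ a v, ∑ b with π b = v, w a b = α a)
    (hcol : ∀ b u, ∑ a with π a = u, w a b = α b)
    (hcap : ∀ a b, w a b * c (π a) (π b) ≤ c' a b)
    (hs : ∀ a, π a = π s → a = s) (ht : ∀ a, π a = π t → a = t) :
    IsFlow c' s t (pullbackFlow π w g) := by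
  refine ⟨fun a b => ⟨?_, ?_⟩, fun a has hat => ?_⟩
  · exact mul_nonneg (hw a b) (hg.1 _ _).1
  · exact (mul_le_mul_of_nonneg_left (hg.1 _ _).2 (hw a b)).trans (hcap a b)
  · rw [sum_pullbackFlow_left hcol, sum_pullbackFlow_right hrow,
      hg.2 _ (mt (hs a) has) (mt (ht a) hat)]

lemma flowValue_pullbackFlow (hrow : ∀ a v, ∑ b with π b = v, w a b = α a)
    (hcol : ∀ b u, ∑ a with π a = u, w a b = α b) (g : V → V → ℝ) (s : W) :
    flowValue (pullbackFlow π w g) s = α s * flowValue g (π s) := by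
  rw [flowValue, flowValue, sum_pullbackFlow_left hcol, sum_pullbackFlow_right hrow, mul_sub]

end Fibration

-- `0 / 0 = 0` makes this `0` when `a + b = 0`, and `parallelShare_mul` holds unconditionally.
def parallelShare (a b : NNReal) : ℝ := a / (a + b)

lemma parallelShare_nonneg (a b : NNReal) : 0 ≤ parallelShare a b := by
  unfold parallelShare; positivity

lemma parallelShare_le_one (a b : NNReal) : parallelShare a b ≤ 1 :=
  div_le_one_of_le₀ (le_add_of_nonneg_right b.coe_nonneg) (by positivity)

lemma parallelShare_mul (a b : NNReal) : parallelShare a b * (a + b) = a :=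
  div_mul_cancel_of_imp fun h => by linarith [a.coe_nonneg, b.coe_nonneg]

lemma one_sub_parallelShare_mul (a b : NNReal) : (1 - parallelShare a b) * (a + b) = b := by
  rw [sub_mul, parallelShare_mul]; ring

section SiblingReplication

variable {V : Type*} {S : Set V} {P : ℕ}

abbrev SibRepVertex (S : Set V) (P : ℕ) := {v : V // v ∉ S} ⊕ (↥S × Fin P)

def sibRepProj : SibRepVertex S P → V
  | .inl v => v
  | .inr (v, _) => v

@[simp] lemma sibRepProj_inl (v : {v : V // v ∉ S}) :
    sibRepProj (P := P) (Sum.inl v) = v := rfl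

@[simp] lemma sibRepProj_inr (v : S) (i : Fin P) :
    sibRepProj (Sum.inr (v, i)) = v := rfl

lemma eq_inl_of_sibRepProj_eq {u : V} (hu : u ∉ S) {a : SibRepVertex S P}
    (h : sibRepProj a = u) : a = Sum.inl ⟨u, hu⟩ := by
  subst h
  rcases a with a | ⟨a, i⟩
  · rfl
  · exact absurd a.2 hu

def reweightCap (c cs : V → V → NNReal) (S : Set V) (P : ℕ) : V → V → NNReal :=
  fun u v => if u ∈ S ∨ v ∈ S then (P : NNReal) * (c u v + cs u v) else c u v

def sibRepWeight (c cs : V → V → NNReal) (σ : ↥S → ↥S → (Fin P ≃ Fin P)) :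
    SibRepVertex S P → SibRepVertex S P → ℝ
  | .inl _, .inl _ => 1
  | .inl _, .inr _ => (P : ℝ)⁻¹
  | .inr _, .inl _ => (P : ℝ)⁻¹
  | .inr (u, i), .inr (v, j) => (P : ℝ)⁻¹ *
      ((if i = j then parallelShare (c u v) (cs u v) else 0) +
        (if j = σ u v i then 1 - parallelShare (c u v) (cs u v) else 0))

def sibRepMass : SibRepVertex S P → ℝ
  | .inl _ => 1
  | .inr _ => (P : ℝ)⁻¹

lemma sibRepWeight_nonneg (c cs : V → V → NNReal) (σ : ↥S → ↥S → (Fin P ≃ Fin P))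
    (a b : SibRepVertex S P) : 0 ≤ sibRepWeight c cs σ a b := by
  rcases a with a | ⟨u, i⟩ <;> rcases b with b | ⟨v, j⟩ <;> simp only [sibRepWeight]
  · positivity
  · positivity
  · positivity
  · refine mul_nonneg (by positivity) (add_nonneg ?_ ?_) <;> split_ifs <;>
      simp [parallelShare_nonneg, parallelShare_le_one]

lemma sibRepWeight_mul_reweightCap_le (hP : P ≠ 0) (c cs : V → V → NNReal)
    (σ : ↥S → ↥S → (Fin P ≃ Fin P)) (hcs : ∀ u v, ¬(u ∈ S ∧ v ∈ S) → cs u v = 0)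
    (a b : SibRepVertex S P) :
    sibRepWeight c cs σ a b * reweightCap c cs S P (sibRepProj a) (sibRepProj b) ≤
      sibRepCap c cs S P σ a b := by
  have hP' : (P : ℝ) ≠ 0 := Nat.cast_ne_zero.2 hP
  rcases a with ⟨u, hu⟩ | ⟨⟨u, hu⟩, i⟩ <;> rcases b with ⟨v, hv⟩ | ⟨⟨v, hv⟩, j⟩
  · simp [sibRepWeight, reweightCap, sibRepCap, hu, hv]
  · simp [sibRepWeight, reweightCap, sibRepCap, hv, hcs u v (fun h => hu h.1), hP']
  · simp [sibRepWeight, reweightCap, sibRepCap, hu, hcs u v (fun h => hv h.2), hP']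
  · simp only [sibRepWeight, reweightCap, sibRepCap, sibRepProj_inr, hu, true_or, if_true]
    push_cast
    rw [mul_mul_mul_comm, inv_mul_cancel₀ hP', one_mul]
    split_ifs <;> simp [parallelShare_mul, one_sub_parallelShare_mul]

variable [Fintype V]

lemma sum_sibRepProj_eq_of_notMem {u : V} (hu : u ∉ S) (F : SibRepVertex S P → ℝ) :
    ∑ a with sibRepProj a = u, F a = F (Sum.inl ⟨u, hu⟩) := by
  have hfib : ({a | sibRepProj a = u} : Finset (SibRepVertex S P)) = {Sum.inl ⟨u, hu⟩} := by
    ext a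
    simpa using ⟨eq_inl_of_sibRepProj_eq hu, fun h => h ▸ rfl⟩
  rw [hfib, sum_singleton]

lemma sum_sibRepProj_eq_of_mem {u : V} (hu : u ∈ S) (F : SibRepVertex S P → ℝ) :
    ∑ a with sibRepProj a = u, F a = ∑ i, F (Sum.inr (⟨u, hu⟩, i)) := by
  have hinl (a : {v // v ∉ S}) : a.1 ≠ u := fun h => a.2 (h ▸ hu)
  have hinr (v : S) : v.1 = u ↔ v = ⟨u, hu⟩ := by rw [Subtype.ext_iff]
  rw [sum_filter, Fintype.sum_sum_type, Fintype.sum_prod_type]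
  simp only [sibRepProj_inl, sibRepProj_inr, hinl, hinr, if_false, sum_const_zero, zero_add]
  rw [sum_comm]
  simp

lemma sum_sibRepCap_fiber_le_reweightCap (c cs : V → V → NNReal)
    (σ : ↥S → ↥S → (Fin P ≃ Fin P)) (u v : V) :
    ∑ a with sibRepProj a = u, ∑ b with sibRepProj b = v, (sibRepCap c cs S P σ a b : ℝ) ≤
      reweightCap c cs S P u v := by
  by_cases hu : u ∈ S <;> by_cases hv : v ∈ S
  · simp [sum_sibRepProj_eq_of_mem hu, sum_sibRepProj_eq_of_mem hv, sibRepCap, reweightCap, hu,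
      sum_add_distrib, apply_ite ((↑) : NNReal → ℝ), mul_add]
  · simp [sum_sibRepProj_eq_of_mem hu, sum_sibRepProj_eq_of_notMem hv, sibRepCap, reweightCap, hu,
      mul_add, mul_nonneg]
  · simp [sum_sibRepProj_eq_of_notMem hu, sum_sibRepProj_eq_of_mem hv, sibRepCap, reweightCap, hv,
      mul_add, mul_nonneg]
  · simp [sum_sibRepProj_eq_of_notMem hu, sum_sibRepProj_eq_of_notMem hv, sibRepCap, reweightCap,
      hu, hv]

lemma sum_sibRepWeight_fiber_right (hP : P ≠ 0) (c cs : V → V → NNReal)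
    (σ : ↥S → ↥S → (Fin P ≃ Fin P)) (a : SibRepVertex S P) (v : V) :
    ∑ b with sibRepProj b = v, sibRepWeight c cs σ a b = sibRepMass a := by
  by_cases hv : v ∈ S
  · rw [sum_sibRepProj_eq_of_mem hv]
    rcases a with a | ⟨u, i⟩ <;>
      simp [sibRepWeight, sibRepMass, hP, ← mul_sum, sum_add_distrib]
  · rw [sum_sibRepProj_eq_of_notMem hv]
    rcases a with a | ⟨u, i⟩ <;> rfl

lemma sum_sibRepWeight_fiber_left (hP : P ≠ 0) (c cs : V → V → NNReal)
    (σ : ↥S → ↥S → (Fin P ≃ Fin P)) (b : SibRepVertex S P) (u : V) :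
    ∑ a with sibRepProj a = u, sibRepWeight c cs σ a b = sibRepMass b := by
  by_cases hu : u ∈ S
  · rw [sum_sibRepProj_eq_of_mem hu]
    rcases b with b | ⟨v, j⟩
    · simp [sibRepWeight, sibRepMass, hP]
    · simp [sibRepWeight, sibRepMass, ← mul_sum, sum_add_distrib, ← Equiv.symm_apply_eq]
  · rw [sum_sibRepProj_eq_of_notMem hu]
    rcases b with b | ⟨v, j⟩ <;> rfl

end SiblingReplication

theorem maxFlow_sibRep_eq_maxFlow_reweight_general {V : Type*} [Fintype V]
    (c cs : V → V → NNReal) (S : Set V) (P : ℕ) (hP : 1 ≤ P)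
    (σ : ↥S → ↥S → (Fin P ≃ Fin P))
    (s t : V) (hs : s ∉ S) (ht : t ∉ S)
    (hcs : ∀ u v, ¬(u ∈ S ∧ v ∈ S) → cs u v = 0) :
    maxFlowValue (sibRepCap c cs S P σ) (Sum.inl ⟨s, hs⟩) (Sum.inl ⟨t, ht⟩) =
      maxFlowValue
        (fun u v => if u ∈ S ∨ v ∈ S then (P : NNReal) * (c u v + cs u v) else c u v)
        s t := by
  have hP₀ : P ≠ 0 := Nat.one_le_iff_ne_zero.1 hP
  have hrow := sum_sibRepWeight_fiber_right hP₀ c cs σ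
  have hcol := sum_sibRepWeight_fiber_left hP₀ c cs σ
  refine maxFlowValue_eq_of_forall_exists (fun f hf => ?_) (fun g hg => ?_)
  · have hcollapse : IsFlow (reweightCap c cs S P) s t (pushforwardFlow sibRepProj f) :=
      hf.pushforward sibRepProj (sum_sibRepCap_fiber_le_reweightCap c cs σ)
    exact ⟨_, hcollapse,
      flowValue_pushforwardFlow sibRepProj f (Sum.inl ⟨s, hs⟩) fun _ =>
        eq_inl_of_sibRepProj_eq hs⟩
  · have hspread : IsFlow (sibRepCap c cs S P σ) (Sum.inl ⟨s, hs⟩) (Sum.inl ⟨t, ht⟩)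
        (pullbackFlow sibRepProj (sibRepWeight c cs σ) g) :=
      IsFlow.pullback (π := sibRepProj) hg (sibRepWeight_nonneg c cs σ) hrow hcol
        (sibRepWeight_mul_reweightCap_le hP₀ c cs σ hcs)
        (fun _ => eq_inl_of_sibRepProj_eq hs) (fun _ => eq_inl_of_sibRepProj_eq ht)
    refine ⟨_, hspread, ?_⟩
    rw [flowValue_pullbackFlow hrow hcol, sibRepMass, one_mul, sibRepProj_inl]

theorem maxFlow_sibRep_eq_maxFlow_reweight {V : Type*} [Fintype V]
    (c cs : V → V → NNReal) (S : Set V) (P : ℕ) (hP : 1 ≤ P)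
    (σ : ↥S → ↥S → (Fin P ≃ Fin P))
    (s t : V) (hst : s ≠ t) (hs : s ∉ S) (ht : t ∉ S)
    (hcs : ∀ u v, ¬(u ∈ S ∧ v ∈ S) → cs u v = 0) :
    maxFlowValue (sibRepCap c cs S P σ) (Sum.inl ⟨s, hs⟩) (Sum.inl ⟨t, ht⟩) =
      maxFlowValue
        (fun u v => if u ∈ S ∨ v ∈ S then (P : NNReal) * (c u v + cs u v) else c u v)
        s t :=
  maxFlow_sibRep_eq_maxFlow_reweight_general c cs S P hP σ s t hs ht hcs

end
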